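/- arXiv:2605.27424 — 5 statements merged into one kernel-verified Lean document; each statement's English description precedes it below -/
import Mathlib

section
/- Let Y be a finite nonempty type and let P_W and P_F be probability distributions on Y. Then the following are equivalent: (i) there exist finite nonempty types X₁ and X₂, a probability distribution P on Y × X₁ × X₂, and outcomes x₁ ∈ X₁, x₂ ∈ X₂ such that (a) the marginal probability P(X₁ = x₁, X₂ = x₂) = ∑_y P(y, x₁, x₂) is nonzero, (b) the marginal P(X₁ = x₁) = ∑_{y,x₂'} P(y, x₁, x₂') is nonzero and for all y, P_W(y) = (∑_{x₂'} P(y, x₁, x₂'))/P(X₁ = x₁), and (c) the marginal P(X₂ = x₂) is nonzero and for all y, P_F(y) = (∑_{x₁'} P(y, x₁', x₂))/P(X₂ = x₂); (ii) the supports of P_W and P_F have nonempty intersection, i.e. there exists y with P_W(y) > 0 and P_F(y) > 0. -/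
open Finset

/-- **Classical objective Bayesian compatibility** (Theorem 1 / BFM criterion):
two probability distributions on a finite nonempty type `Y` are objectively
Bayesian compatible iff their supports intersect nontrivially. -/
theorem classical_objective_bayesian_compatibility
    (Y : Type) [Fintype Y] [Nonempty Y]
    (PW PF : Y → ℝ)
    (hWnn : ∀ y, 0 ≤ PW y) (hWsum : ∑ y, PW y = 1)
    (hFnn : ∀ y, 0 ≤ PF y) (hFsum : ∑ y, PF y = 1) :
    (∃ (X₁ : Type) (_ : Fintype X₁) (_ : Nonempty X₁)
       (X₂ : Type) (_ : Fintype X₂) (_ : Nonempty X₂)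
       (P : Y × X₁ × X₂ → ℝ) (x₁ : X₁) (x₂ : X₂),
        (∀ z, 0 ≤ P z) ∧ (∑ z, P z = 1) ∧
        -- (a) the joint marginal P(X₁ = x₁, X₂ = x₂) is nonzero
        (∑ y, P (y, x₁, x₂)) ≠ 0 ∧
        -- (b) P_W arises by conditioning on X₁ = x₁
        (∑ y, ∑ x₂', P (y, x₁, x₂')) ≠ 0 ∧
        (∀ y, PW y = (∑ x₂', P (y, x₁, x₂')) / (∑ y', ∑ x₂', P (y', x₁, x₂'))) ∧
        -- (c) P_F arises by conditioning on X₂ = x₂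
        (∑ y, ∑ x₁', P (y, x₁', x₂)) ≠ 0 ∧
        (∀ y, PF y = (∑ x₁', P (y, x₁', x₂)) / (∑ y', ∑ x₁', P (y', x₁', x₂))))
    ↔ (∃ y, 0 < PW y ∧ 0 < PF y) := by
  constructor
  · rintro ⟨X₁, _, _, X₂, _, _, P, x₁, x₂, hnn, hsum, ha, hb0, hb, hc0, hc⟩
    have h1 : ∃ y, 0 < P (y, x₁, x₂) := by
      by_contra h
      push_neg at h
      exact ha (Finset.sum_eq_zero fun y _ => le_antisymm (h y) (hnn _))
    obtain ⟨y, hy⟩ := h1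
    refine ⟨y, ?_, ?_⟩
    · rw [hb y]
      exact div_pos
        (lt_of_lt_of_le hy (Finset.single_le_sum (f := fun x₂' => P (y, x₁, x₂'))
          (fun i _ => hnn _) (mem_univ x₂)))
        (lt_of_le_of_ne
          (Finset.sum_nonneg fun i _ => Finset.sum_nonneg fun j _ => hnn _) (Ne.symm hb0))
    · rw [hc y]
      exact div_pos
        (lt_of_lt_of_le hy (Finset.single_le_sum (f := fun x₁' => P (y, x₁', x₂))
          (fun i _ => hnn _) (mem_univ x₁)))
        (lt_of_le_of_ne
          (Finset.sum_nonneg fun i _ => Finset.sum_nonneg fun j _ => hnn _) (Ne.symm hc0))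
  · rintro ⟨y₀, hW, hF⟩
    classical
    set t : ℝ := min (PW y₀) (PF y₀) / 4 with ht
    have ht0 : 0 < t := by
      apply div_pos (lt_min hW hF); norm_num
    set ind : Y → ℝ := fun y => if y = y₀ then 1 else 0 with hind
    have hind0 : ∀ y, 0 ≤ ind y := by
      intro y; simp only [hind]; split <;> norm_num
    have hind1 : ∀ y, ind y ≤ 1 := by
      intro y; simp only [hind]; split <;> norm_num
    have hsumind : ∑ y, ind y = 1 := by
      simp [hind]
    have htW : ∀ y, t * ind y ≤ PW y / 2 := by
      intro y
      simp only [hind]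
      split
      · next h =>
        subst h
        calc t * 1 = min (PW y) (PF y) / 4 := by rw [ht]; ring
        _ ≤ PW y / 2 := by
          have := min_le_left (PW y) (PF y); linarith
      · simp; linarith [hWnn y]
    have htF : ∀ y, t * ind y ≤ PF y / 2 := by
      intro y
      simp only [hind]
      split
      · next h =>
        subst h
        calc t * 1 = min (PW y) (PF y) / 4 := by rw [ht]; ring
        _ ≤ PF y / 2 := by
          have := min_le_right (PW y) (PF y); linarith
      · simp; linarith [hFnn y]
    refine ⟨Bool, inferInstance, inferInstance, Bool, inferInstance, inferInstance,
      fun z => cond z.2.1 (cond z.2.2 (t * ind z.1) (PW z.1 / 2 - t * ind z.1))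
        (cond z.2.2 (PF z.1 / 2 - t * ind z.1) (t * ind z.1)),
      true, true, ?_, ?_, ?_, ?_, ?_, ?_, ?_⟩
    · rintro ⟨y, a, b⟩
      have h0 : 0 ≤ t * ind y := mul_nonneg ht0.le (hind0 y)
      rcases a <;> rcases b <;> simp only [cond_true, cond_false]
      · exact h0
      · linarith [htF y]
      · linarith [htW y]
      · exact h0
    · rw [Fintype.sum_prod_type]
      simp only [Fintype.sum_prod_type, Fintype.sum_bool, cond_true, cond_false]
      have : ∀ y : Y, (t * ind y + (PW y / 2 - t * ind y)) + ((PF y / 2 - t * ind y) + t * ind y)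
          = PW y / 2 + PF y / 2 := by intro y; ring
      rw [Finset.sum_congr rfl (fun y _ => this y), Finset.sum_add_distrib]
      rw [← Finset.sum_div, ← Finset.sum_div, hWsum, hFsum]; norm_num
    · simp only [cond_true]
      rw [show (∑ y, t * ind y) = t * ∑ y, ind y from (Finset.mul_sum _ _ _).symm, hsumind]
      simp; positivity
    · simp only [Fintype.sum_bool, cond_true, cond_false]
      have : ∀ y : Y, t * ind y + (PW y / 2 - t * ind y) = PW y / 2 := fun y => by ring
      rw [Finset.sum_congr rfl (fun y _ => this y), ← Finset.sum_div, hWsum]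
      norm_num
    · intro y
      simp only [Fintype.sum_bool, cond_true, cond_false]
      have h1 : t * ind y + (PW y / 2 - t * ind y) = PW y / 2 := by ring
      have : ∀ y' : Y, t * ind y' + (PW y' / 2 - t * ind y') = PW y' / 2 := fun y' => by ring
      rw [h1, Finset.sum_congr rfl (fun y' _ => this y'), ← Finset.sum_div, hWsum]
      ring
    · simp only [Fintype.sum_bool, cond_true, cond_false]
      have : ∀ y : Y, t * ind y + (PF y / 2 - t * ind y) = PF y / 2 := fun y => by ring
      rw [Finset.sum_congr rfl (fun y _ => this y), ← Finset.sum_div, hFsum]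
      norm_num
    · intro y
      simp only [Fintype.sum_bool, cond_true, cond_false]
      have h1 : t * ind y + (PF y / 2 - t * ind y) = PF y / 2 := by ring
      have : ∀ y' : Y, t * ind y' + (PF y' / 2 - t * ind y') = PF y' / 2 := fun y' => by ring
      rw [h1, Finset.sum_congr rfl (fun y' _ => this y'), ← Finset.sum_div, hFsum]
      ring
end

section
/- Let Y be a finite nonempty type and let P_W and P_F be probability distributions on Y. Then the following are equivalent: (i) there exist a finite nonempty type X and a likelihood function L : X → Y → ℝ with L(x)(y) ≥ 0 and ∑_{x∈X} L(x)(y) = 1 for every y, together with an outcome x' ∈ X such that the normalizations N_J := ∑_y L(x')(y)·P_J(y) are nonzero for both J ∈ {W, F}, and for every y the Bayesian posteriors agree: L(x')(y)·P_W(y)/N_W = L(x')(y)·P_F(y)/N_F; (ii) there exists y with P_W(y) > 0 and P_F(y) > 0. -/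
open Finset

/-- **Classical subjective Bayesian compatibility** (Theorem 2 / BFM criterion):
two probability distributions on a finite nonempty type `Y` are subjectively
Bayesian compatible (there is an agreed-upon experiment with an outcome on which
both Bayesian posteriors coincide) iff their supports intersect nontrivially. -/
theorem classical_subjective_bayesian_compatibility
    (Y : Type) [Fintype Y] [Nonempty Y]
    (PW PF : Y → ℝ)
    (hWnn : ∀ y, 0 ≤ PW y) (hWsum : ∑ y, PW y = 1)
    (hFnn : ∀ y, 0 ≤ PF y) (hFsum : ∑ y, PF y = 1) :
    (∃ (X : Type) (_ : Fintype X) (_ : Nonempty X) (L : X → Y → ℝ) (x' : X),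
        (∀ x y, 0 ≤ L x y) ∧ (∀ y, ∑ x, L x y = 1) ∧
        (∑ y, L x' y * PW y) ≠ 0 ∧
        (∑ y, L x' y * PF y) ≠ 0 ∧
        (∀ y, L x' y * PW y / (∑ y', L x' y' * PW y')
            = L x' y * PF y / (∑ y', L x' y' * PF y')))
    ↔ (∃ y, 0 < PW y ∧ 0 < PF y) := by
  constructor
  · rintro ⟨X, _, _, L, x', hLnn, hLsum, hNW, hNF, hpost⟩
    -- normalizations are positive
    have hNWpos : 0 < ∑ y, L x' y * PW y :=
      lt_of_le_of_ne (Finset.sum_nonneg fun y _ => mul_nonneg (hLnn x' y) (hWnn y))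
        (Ne.symm hNW)
    have hNFpos : 0 < ∑ y, L x' y * PF y :=
      lt_of_le_of_ne (Finset.sum_nonneg fun y _ => mul_nonneg (hLnn x' y) (hFnn y))
        (Ne.symm hNF)
    -- find y with positive term
    obtain ⟨y, hy⟩ : ∃ y, 0 < L x' y * PW y := by
      by_contra h
      push_neg at h
      have : ∑ y, L x' y * PW y = 0 :=
        Finset.sum_eq_zero fun y _ =>
          le_antisymm (h y) (mul_nonneg (hLnn x' y) (hWnn y))
      exact hNW this
    have hWpos : 0 < L x' y * PW y / (∑ y', L x' y' * PW y') := div_pos hy hNWpos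
    have hFpos : 0 < L x' y * PF y := by
      have := hpost y
      rw [this] at hWpos
      by_contra h
      push_neg at h
      have : L x' y * PF y / (∑ y', L x' y' * PF y') ≤ 0 :=
        div_nonpos_of_nonpos_of_nonneg h hNFpos.le
      linarith
    refine ⟨y, ?_, ?_⟩
    · rcases (mul_pos_iff.mp hy) with ⟨_, h⟩ | ⟨h, _⟩
      · exact h
      · exact absurd (hLnn x' y) (not_le.mpr h)
    · rcases (mul_pos_iff.mp hFpos) with ⟨_, h⟩ | ⟨h, _⟩
      · exact h
      · exact absurd (hLnn x' y) (not_le.mpr h)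
  · rintro ⟨y₀, hW, hF⟩
    classical
    refine ⟨Bool, inferInstance, inferInstance,
      fun b y => if b then (if y = y₀ then 1 else 0) else (if y = y₀ then 0 else 1),
      true, ?_, ?_, ?_, ?_, ?_⟩
    · intro x y
      cases x <;> dsimp only <;> split_ifs <;> norm_num
    · intro y
      simp [Fintype.sum_bool]
      split <;> norm_num
    · simp only [if_true]
      rw [Finset.sum_eq_single y₀ (fun y _ hy => by simp [hy]) (by simp)]
      simp [hW.ne']
    · simp only [if_true]
      rw [Finset.sum_eq_single y₀ (fun y _ hy => by simp [hy]) (by simp)]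
      simp [hF.ne']
    · intro y
      simp only [if_true]
      rw [Finset.sum_eq_single y₀ (fun y _ hy => by simp [hy]) (by simp),
          Finset.sum_eq_single y₀ (fun y _ hy => by simp [hy]) (by simp)]
      by_cases hy : y = y₀ <;> simp [hy, hW.ne', hF.ne']
end

section
/- Let σ_W and σ_F be density matrices on ℂ^d (d ≥ 1). Then the following are equivalent: (i) there exist a finite nonempty type X and a family of positive semidefinite d×d complex matrices (E_x)_{x∈X} with ∑_{x∈X} E_x = 1 (the identity matrix), together with an outcome x' ∈ X such that Tr(E_{x'} σ_J) ≠ 0 for both J ∈ {W, F} and (√σ_W · E_{x'} · √σ_W)/Tr(E_{x'} σ_W) = (√σ_F · E_{x'} · √σ_F)/Tr(E_{x'} σ_F); (ii) the intersection of the ranges of σ_W and σ_F (as linear maps ℂ^d → ℂ^d) contains a nonzero vector. -/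
open Matrix
open scoped ComplexOrder

/-- The positive semidefinite square root of a positive semidefinite matrix
(the definition removed from Mathlib, restored with its old value). -/
noncomputable def Matrix.PosSemidef.sqrt {n 𝕜 : Type*} [Fintype n] [DecidableEq n] [RCLike 𝕜]
    {A : Matrix n n 𝕜} (hA : A.PosSemidef) : Matrix n n 𝕜 :=
  (hA.1.eigenvectorUnitary : Matrix n n 𝕜) *
  diagonal (fun i => ((Real.sqrt (hA.1.eigenvalues i) : ℝ) : 𝕜)) *
  (star hA.1.eigenvectorUnitary : Matrix n n 𝕜)

lemma Matrix.IsHermitian.spectral_theorem' {n 𝕜 : Type*} [Fintype n] [DecidableEq n] [RCLike 𝕜]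
    {A : Matrix n n 𝕜} (hA : A.IsHermitian) :
    A = (hA.eigenvectorUnitary : Matrix n n 𝕜) * diagonal (RCLike.ofReal ∘ hA.eigenvalues) *
      (star hA.eigenvectorUnitary : Matrix n n 𝕜) := by
  exact hA.spectral_theorem

lemma Matrix.PosSemidef.posSemidef_sqrt {n 𝕜 : Type*} [Fintype n] [DecidableEq n] [RCLike 𝕜]
    {A : Matrix n n 𝕜} (hA : A.PosSemidef) : hA.sqrt.PosSemidef := by
  unfold Matrix.PosSemidef.sqrt
  have h := PosSemidef.mul_mul_conjTranspose_same
    (posSemidef_diagonal_iff.mpr fun i => (RCLike.ofReal_nonneg (K := 𝕜)).mpr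
      (Real.sqrt_nonneg (hA.1.eigenvalues i)))
    (hA.1.eigenvectorUnitary : Matrix n n 𝕜)
  simpa [← star_eq_conjTranspose] using h

lemma Matrix.PosSemidef.sqrt_mul_self {n 𝕜 : Type*} [Fintype n] [DecidableEq n] [RCLike 𝕜]
    {A : Matrix n n 𝕜} (hA : A.PosSemidef) : hA.sqrt * hA.sqrt = A := by
  unfold Matrix.PosSemidef.sqrt
  conv_rhs => rw [hA.1.spectral_theorem']
  have hu : (star hA.1.eigenvectorUnitary : Matrix n n 𝕜) * (hA.1.eigenvectorUnitary) = 1 :=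
    Unitary.coe_star_mul_self _
  calc _ = (hA.1.eigenvectorUnitary : Matrix n n 𝕜) *
        (diagonal (fun i => ((Real.sqrt (hA.1.eigenvalues i) : ℝ) : 𝕜)) *
        ((star hA.1.eigenvectorUnitary : Matrix n n 𝕜) * (hA.1.eigenvectorUnitary)) *
        diagonal (fun i => ((Real.sqrt (hA.1.eigenvalues i) : ℝ) : 𝕜))) *
        (star hA.1.eigenvectorUnitary : Matrix n n 𝕜) := by simp only [Matrix.mul_assoc]
    _ = _ := by
      rw [hu, Matrix.mul_one, diagonal_mul_diagonal]
      have hd : (fun i => ((Real.sqrt (hA.1.eigenvalues i) : ℝ) : 𝕜) *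
          ((Real.sqrt (hA.1.eigenvalues i) : ℝ) : 𝕜)) = RCLike.ofReal ∘ hA.1.eigenvalues := by
        funext i
        rw [← RCLike.ofReal_mul, Real.mul_self_sqrt (hA.eigenvalues_nonneg i)]
        rfl
      rw [hd]

namespace QSBC
variable {d : ℕ}

lemma mul_vecMulVec (A : Matrix (Fin d) (Fin d) ℂ) (a b : Fin d → ℂ) :
    A * vecMulVec a b = vecMulVec (A *ᵥ a) b := by
  ext i j
  simp only [Matrix.mul_apply, vecMulVec_apply, mulVec, dotProduct, Finset.sum_mul]
  congr 1; ext k; ring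

lemma vecMulVec_mul (a b : Fin d → ℂ) (B : Matrix (Fin d) (Fin d) ℂ) :
    vecMulVec a b * B = vecMulVec a (b ᵥ* B) := by
  ext i j
  simp only [Matrix.mul_apply, vecMulVec_apply, vecMul, dotProduct, Finset.mul_sum]
  congr 1; ext k; ring

lemma trace_vecMulVec_mul (a b : Fin d → ℂ) (M : Matrix (Fin d) (Fin d) ℂ) :
    (vecMulVec a b * M).trace = b ⬝ᵥ (M *ᵥ a) := by
  simp only [Matrix.trace, Matrix.diag, Matrix.mul_apply, vecMulVec_apply, dotProduct, mulVec,
    Finset.mul_sum]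
  rw [Finset.sum_comm]
  congr 1; ext k; congr 1; ext i; ring

lemma vecMulVec_mul_vecMulVec (a b c e : Fin d → ℂ) :
    vecMulVec a b * vecMulVec c e = (b ⬝ᵥ c) • vecMulVec a e := by
  ext i j
  simp only [Matrix.mul_apply, vecMulVec_apply, Matrix.smul_apply, dotProduct, smul_eq_mul,
    Finset.sum_mul, Finset.mul_sum]
  congr 1; ext k; ring

lemma vecMulVec_conjTranspose (a : Fin d → ℂ) :
    (vecMulVec a (star a))ᴴ = vecMulVec a (star a) := by
  ext i j
  simp [conjTranspose_apply, vecMulVec_apply, mul_comm]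

lemma eq_zero_of_forall_mulVec {A : Matrix (Fin d) (Fin d) ℂ} (h : ∀ x, A *ᵥ x = 0) : A = 0 := by
  ext i j
  have := congrFun (h (Pi.single j 1)) i
  simpa [Matrix.mulVec_single] using this

lemma psd_eq_zero_of_add_eq_zero {A B : Matrix (Fin d) (Fin d) ℂ}
    (hA : A.PosSemidef) (hB : B.PosSemidef) (h : A + B = 0) : A = 0 := by
  have hAB : A = -B := by linear_combination (norm := module) h
  apply eq_zero_of_forall_mulVec
  intro x
  have h1 : star x ⬝ᵥ A *ᵥ x = 0 := by
    refine le_antisymm ?_ (hA.dotProduct_mulVec_nonneg x)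
    rw [hAB, neg_mulVec, dotProduct_neg]
    exact neg_nonpos.mpr (hB.dotProduct_mulVec_nonneg x)
  exact (hA.dotProduct_mulVec_zero_iff x).mp h1

lemma star_mulVec_of_hermitian {S : Matrix (Fin d) (Fin d) ℂ} (hS : S.IsHermitian)
    (f : Fin d → ℂ) : star (S *ᵥ f) = star f ᵥ* S := by
  rw [star_mulVec, hS.eq]

lemma range_sqrt {σ : Matrix (Fin d) (Fin d) ℂ} (hσ : σ.PosSemidef) :
    LinearMap.range σ.mulVecLin = LinearMap.range hσ.sqrt.mulVecLin := by
  set S := hσ.sqrt with hSdef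
  have hmul : S * S = σ := hσ.sqrt_mul_self
  have hker : LinearMap.ker σ.mulVecLin = LinearMap.ker S.mulVecLin := by
    ext x
    simp only [LinearMap.mem_ker, mulVecLin_apply]
    constructor
    · intro h
      have h2 : star (S *ᵥ x) ⬝ᵥ (S *ᵥ x) = 0 := by
        rw [star_mulVec_of_hermitian hσ.posSemidef_sqrt.1, ← dotProduct_mulVec,
          mulVec_mulVec, hmul, h, dotProduct_zero]
      exact dotProduct_star_self_eq_zero.mp h2
    · intro h
      rw [← hmul, ← mulVec_mulVec, h, mulVec_zero]
  have hle : LinearMap.range σ.mulVecLin ≤ LinearMap.range S.mulVecLin := by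
    rintro _ ⟨x, rfl⟩
    exact ⟨S *ᵥ x, by simp [mulVecLin_apply, mulVec_mulVec, hmul]⟩
  refine Submodule.eq_of_le_of_finrank_eq hle ?_
  have h1 := σ.mulVecLin.finrank_range_add_finrank_ker
  have h2 := S.mulVecLin.finrank_range_add_finrank_ker
  rw [hker] at h1
  omega


lemma smul_vecMulVec (r : ℂ) (a b : Fin d → ℂ) :
    vecMulVec (r • a) b = r • vecMulVec a b := by
  ext i j
  simp only [vecMulVec_apply, Pi.smul_apply, Matrix.smul_apply, smul_eq_mul]
  ring

lemma vecMulVec_smul' (r : ℂ) (a b : Fin d → ℂ) :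
    vecMulVec a (r • b) = r • vecMulVec a b := by
  ext i j
  simp only [vecMulVec_apply, Pi.smul_apply, Matrix.smul_apply, smul_eq_mul]
  ring

set_option maxHeartbeats 1000000 in
lemma exists_parallel {S T : Matrix (Fin d) (Fin d) ℂ} (hS : S.PosSemidef) (hT : T.PosSemidef)
    {v : Fin d → ℂ} (hv : v ≠ 0) (hvS : ∃ a, S *ᵥ a = v) (hvT : ∃ b, T *ᵥ b = v) :
    ∃ (f : Fin d → ℂ) (γ : ℂ), γ ≠ 0 ∧ T *ᵥ f ≠ 0 ∧ S *ᵥ f = γ • T *ᵥ f := by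
  classical
  set G := S + T with hGdef
  have hG : G.PosSemidef := hS.add hT
  set μ : Fin d → ℝ := hG.1.eigenvalues with hμdef
  have hμ0 : ∀ i, 0 ≤ μ i := hG.eigenvalues_nonneg
  set U : Matrix (Fin d) (Fin d) ℂ := (hG.1.eigenvectorUnitary : Matrix (Fin d) (Fin d) ℂ)
    with hUdef
  have hU1 : star U * U = 1 := Unitary.coe_star_mul_self _
  have hU2 : U * star U = 1 := Unitary.coe_mul_star_self _
  have hspec : G = U * diagonal (fun i => (μ i : ℂ)) * star U := hG.1.spectral_theorem'
  have hdiagG : star U * G * U = diagonal (fun i => (μ i : ℂ)) := by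
    rw [hspec]
    calc star U * (U * diagonal (fun i => (μ i : ℂ)) * star U) * U
        = (star U * U) * diagonal (fun i => (μ i : ℂ)) * (star U * U) := by
          simp only [Matrix.mul_assoc]
      _ = diagonal (fun i => (μ i : ℂ)) := by rw [hU1]; simp
  -- the scaling diagonal
  set w : Fin d → ℂ := fun i => if μ i = 0 then 1 else ((Real.sqrt (μ i))⁻¹ : ℝ) with hwdef
  set winv : Fin d → ℂ := fun i => if μ i = 0 then 1 else ((Real.sqrt (μ i)) : ℝ) with hwinvdef
  set χ : Fin d → ℂ := fun i => if μ i = 0 then 0 else 1 with hχdef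
  have hsqrt_ne : ∀ i, μ i ≠ 0 → Real.sqrt (μ i) ≠ 0 := fun i h =>
    Real.sqrt_ne_zero'.mpr (lt_of_le_of_ne (hμ0 i) (Ne.symm h))
  have hwwinv : ∀ i, w i * winv i = 1 := by
    intro i
    by_cases h : μ i = 0
    · simp [hwdef, hwinvdef, h]
    · simp only [hwdef, hwinvdef, if_neg h]
      norm_cast
      exact inv_mul_cancel₀ (hsqrt_ne i h)
  have hwμw : ∀ i, w i * (μ i : ℂ) * w i = χ i := by
    intro i
    by_cases h : μ i = 0
    · simp [hwdef, hχdef, h]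
    · simp only [hwdef, hχdef, if_neg h]
      norm_cast
      rw [show (Real.sqrt (μ i))⁻¹ * μ i * (Real.sqrt (μ i))⁻¹
           = μ i / (Real.sqrt (μ i) * Real.sqrt (μ i)) by ring,
        Real.mul_self_sqrt (hμ0 i), div_self h]
  have hwstar : star w = w := by
    funext i
    by_cases h : μ i = 0 <;> simp [hwdef, h]
  set W : Matrix (Fin d) (Fin d) ℂ := U * diagonal w with hWdef
  set W' : Matrix (Fin d) (Fin d) ℂ := diagonal winv * star U with hW'def
  have hWW' : W * W' = 1 := by
    calc W * W' = U * (diagonal w * diagonal winv) * star U := by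
          rw [hWdef, hW'def]; simp only [Matrix.mul_assoc]
      _ = U * 1 * star U := by
          rw [diagonal_mul_diagonal, show diagonal (fun i => w i * winv i)
            = (1 : Matrix (Fin d) (Fin d) ℂ) from by
              rw [← diagonal_one]; exact congrArg diagonal (funext hwwinv)]
      _ = 1 := by rw [mul_one, hU2]
  have hW'W : W' * W = 1 := by
    calc W' * W = diagonal winv * (star U * U) * diagonal w := by
          rw [hWdef, hW'def]; simp only [Matrix.mul_assoc]
      _ = diagonal winv * diagonal w := by rw [hU1, mul_one]
      _ = 1 := by
          rw [diagonal_mul_diagonal, ← diagonal_one]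
          exact congrArg diagonal (funext fun i => by rw [mul_comm]; exact hwwinv i)
  have hstarW : Wᴴ = diagonal w * star U := by
    rw [hWdef, ← star_eq_conjTranspose, StarMul.star_mul,
      star_eq_conjTranspose (diagonal w), diagonal_conjTranspose, hwstar]
  set P : Matrix (Fin d) (Fin d) ℂ := diagonal χ with hPdef
  have hP : Wᴴ * G * W = P := by
    rw [hstarW, hWdef]
    calc diagonal w * star U * G * (U * diagonal w)
        = diagonal w * (star U * G * U) * diagonal w := by simp only [Matrix.mul_assoc]
      _ = diagonal w * diagonal (fun i => (μ i : ℂ)) * diagonal w := by rw [hdiagG]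
      _ = P := by
          rw [diagonal_mul_diagonal, diagonal_mul_diagonal, hPdef]
          exact congrArg diagonal (funext hwμw)
  -- congruence transforms
  set S1 : Matrix (Fin d) (Fin d) ℂ := Wᴴ * S * W with hS1def
  set T1 : Matrix (Fin d) (Fin d) ℂ := Wᴴ * T * W with hT1def
  have hS1 : S1.PosSemidef := hS.conjTranspose_mul_mul_same W
  have hT1 : T1.PosSemidef := hT.conjTranspose_mul_mul_same W
  have hsum : S1 + T1 = P := by
    rw [hS1def, hT1def, ← hP, hGdef]
    rw [Matrix.mul_add, Matrix.add_mul]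
  have hPP : P * P = P := by
    rw [hPdef, diagonal_mul_diagonal]
    exact congrArg diagonal (funext fun i => by by_cases h : μ i = 0 <;> simp [hχdef, h])
  have hPH : Pᴴ = P := by
    rw [hPdef, diagonal_conjTranspose]
    exact congrArg diagonal (funext fun i => by by_cases h : μ i = 0 <;> simp [hχdef, h])
  -- S1 * P = S1 etc.
  set Q : Matrix (Fin d) (Fin d) ℂ := 1 - P with hQdef
  have hQH : Qᴴ = Q := by rw [hQdef, conjTranspose_sub, conjTranspose_one, hPH]
  have hQP : Q * P = 0 := by rw [hQdef, Matrix.sub_mul, Matrix.one_mul, hPP, sub_self]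
  have hzero : Qᴴ * S1 * Q + Qᴴ * T1 * Q = 0 := by
    have : Qᴴ * S1 * Q + Qᴴ * T1 * Q = Qᴴ * (S1 + T1) * Q := by
      rw [Matrix.mul_add, Matrix.add_mul]
    rw [this, hsum, hQH, hQP, Matrix.zero_mul]
  have hQS1Q : Qᴴ * S1 * Q = 0 :=
    psd_eq_zero_of_add_eq_zero (hS1.conjTranspose_mul_mul_same Q)
      (hT1.conjTranspose_mul_mul_same Q) hzero
  have hS1Q : S1 * Q = 0 := by
    set R := hS1.sqrt with hRdef
    have hRH : Rᴴ = R := hS1.posSemidef_sqrt.1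
    have hRR : R * R = S1 := hS1.sqrt_mul_self
    have h1 : (R * Q)ᴴ * (R * Q) = 0 := by
      rw [conjTranspose_mul, hRH, hQH]
      calc Q * R * (R * Q) = Qᴴ * (R * R) * Q := by rw [hQH]; simp only [Matrix.mul_assoc]
        _ = 0 := by rw [hRR, hQS1Q]
    have h2 : R * Q = 0 := conjTranspose_mul_self_eq_zero.mp h1
    rw [← hRR, Matrix.mul_assoc, h2, Matrix.mul_zero]
  have hS1P : S1 * P = S1 := by
    have : S1 * (1 - Q) = S1 := by rw [Matrix.mul_sub, hS1Q, Matrix.mul_one, sub_zero]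
    simpa [hQdef] using this
  have hPS1 : P * S1 = S1 := by
    have := congrArg conjTranspose hS1P
    rwa [conjTranspose_mul, hPH, hS1.1.eq] at this
  have hT1eq : T1 = P - S1 := by rw [← hsum]; abel
  -- invertibility transfer
  set V : Matrix (Fin d) (Fin d) ℂ := W'ᴴ with hVdef
  have hWHV : Wᴴ * V = 1 := by
    rw [hVdef, ← conjTranspose_mul, hW'W, conjTranspose_one]
  have hVWH : V * Wᴴ = 1 := by
    rw [hVdef, ← conjTranspose_mul, hWW', conjTranspose_one]
  by_cases hcase : ∃ i, hS1.1.eigenvalues i ≠ 0 ∧ hS1.1.eigenvalues i ≠ 1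
  · -- good case: eigenvalue strictly between, gives parallel vector
    obtain ⟨i, hx0, hx1⟩ := hcase
    set x : ℝ := hS1.1.eigenvalues i with hxdef
    set e : Fin d → ℂ := ⇑(hS1.1.eigenvectorBasis i) with hedef
    have he : S1 *ᵥ e = (x : ℂ) • e := by
      have hmv := hS1.1.mulVec_eigenvectorBasis i
      rw [hedef, hmv]
      funext j
      simp [Complex.real_smul, hxdef]
    have he0 : e ≠ 0 := by
      intro h
      have : (hS1.1.eigenvectorBasis i : EuclideanSpace ℂ (Fin d)) = 0 := by
        apply PiLp.ext
        intro j
        exact congrFun h j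
      exact (hS1.1.eigenvectorBasis.toBasis.ne_zero i) (by simpa using this)
    have hxC0 : (x : ℂ) ≠ 0 := by exact_mod_cast hx0
    have hxC1 : (1 : ℂ) - (x : ℂ) ≠ 0 := by
      intro h
      apply hx1
      have : (x : ℂ) = 1 := by linear_combination -h
      exact_mod_cast this
    have hPe : P *ᵥ e = e := by
      have h1 : P *ᵥ (S1 *ᵥ e) = S1 *ᵥ e := by rw [mulVec_mulVec, hPS1]
      rw [he, mulVec_smul] at h1
      exact smul_right_injective _ hxC0 h1
    have hT1e : T1 *ᵥ e = ((1 : ℂ) - (x : ℂ)) • e := by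
      rw [hT1eq, sub_mulVec, hPe, he, sub_smul, one_smul]
    set f : Fin d → ℂ := W *ᵥ e with hfdef
    set h : Fin d → ℂ := V *ᵥ e with hhdef
    have hh0 : h ≠ 0 := by
      intro hzero
      apply he0
      have : Wᴴ *ᵥ h = e := by rw [hhdef, mulVec_mulVec, hWHV, one_mulVec]
      rw [hzero, mulVec_zero] at this
      exact this.symm
    have hSW : S * W = V * S1 := by
      have h' : V * S1 = (V * Wᴴ) * (S * W) := by rw [hS1def]; simp only [Matrix.mul_assoc]
      rw [h', hVWH, Matrix.one_mul]
    have hTW : T * W = V * T1 := by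
      have h' : V * T1 = (V * Wᴴ) * (T * W) := by rw [hT1def]; simp only [Matrix.mul_assoc]
      rw [h', hVWH, Matrix.one_mul]
    have hSf : S *ᵥ f = (x : ℂ) • h := by
      rw [hfdef, mulVec_mulVec, hSW, ← mulVec_mulVec, he, mulVec_smul, hhdef]
    have hTf : T *ᵥ f = ((1 : ℂ) - (x : ℂ)) • h := by
      rw [hfdef, mulVec_mulVec, hTW, ← mulVec_mulVec, hT1e, mulVec_smul, hhdef]
    refine ⟨f, (x : ℂ) / ((1 : ℂ) - (x : ℂ)), div_ne_zero hxC0 hxC1, ?_, ?_⟩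
    · rw [hTf]
      exact smul_ne_zero hxC1 hh0
    · rw [hSf, hTf, smul_smul, div_mul_cancel₀ _ hxC1]
  · -- bad case: S1 is a projection; contradiction with common range vector
    exfalso
    push_neg at hcase
    have hidem : S1 * S1 = S1 := by
      obtain ⟨U1, D, hU1', hDD, hs⟩ : ∃ (U1 D : Matrix (Fin d) (Fin d) ℂ),
          star U1 * U1 = 1 ∧ D * D = D ∧ S1 = U1 * D * star U1 := by
        refine ⟨_, _, Unitary.coe_star_mul_self _, ?_, hS1.1.spectral_theorem'⟩
        rw [diagonal_mul_diagonal]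
        refine congrArg diagonal (funext fun j => ?_)
        simp only [Function.comp_apply]
        by_cases h0 : hS1.1.eigenvalues j = 0
        · rw [h0]; simp
        · rw [hcase j h0]; norm_num
      rw [hs]
      calc U1 * D * star U1 * (U1 * D * star U1)
          = U1 * (D * ((star U1 * U1) * (D * star U1))) := by simp only [Matrix.mul_assoc]
        _ = U1 * D * star U1 := by
            rw [hU1', Matrix.one_mul, ← Matrix.mul_assoc D D, hDD]
            simp only [Matrix.mul_assoc]
    have hS1T1 : S1 * T1 = 0 := by
      rw [hT1eq, Matrix.mul_sub, hS1P, hidem, sub_self]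
    -- transfer v
    obtain ⟨a, ha⟩ := hvS
    obtain ⟨b, hb⟩ := hvT
    set u : Fin d → ℂ := Wᴴ *ᵥ v with hudef
    have hu0 : u ≠ 0 := by
      intro h
      apply hv
      have : V *ᵥ u = v := by rw [hudef, mulVec_mulVec, hVWH, one_mulVec]
      rw [h, mulVec_zero] at this
      exact this.symm
    have hua : S1 *ᵥ (W' *ᵥ a) = u := by
      have hm : S1 * W' = Wᴴ * S := by
        rw [hS1def]
        calc Wᴴ * S * W * W' = Wᴴ * S * (W * W') := by simp only [Matrix.mul_assoc]
          _ = Wᴴ * S := by rw [hWW', Matrix.mul_one]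
      rw [mulVec_mulVec, hm, hudef, ← ha, mulVec_mulVec]
    have hub : T1 *ᵥ (W' *ᵥ b) = u := by
      have hm : T1 * W' = Wᴴ * T := by
        rw [hT1def]
        calc Wᴴ * T * W * W' = Wᴴ * T * (W * W') := by simp only [Matrix.mul_assoc]
          _ = Wᴴ * T := by rw [hWW', Matrix.mul_one]
      rw [mulVec_mulVec, hm, hudef, ← hb, mulVec_mulVec]
    have h1 : S1 *ᵥ u = u := by
      have hx : S1 *ᵥ (S1 *ᵥ (W' *ᵥ a)) = S1 *ᵥ (W' *ᵥ a) := by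
        rw [mulVec_mulVec (W' *ᵥ a) S1 S1, hidem]
      rw [hua] at hx; exact hx
    have h2 : S1 *ᵥ u = 0 := by
      have hx : S1 *ᵥ (T1 *ᵥ (W' *ᵥ b)) = 0 := by
        rw [mulVec_mulVec, hS1T1, zero_mulVec]
      rw [hub] at hx; exact hx
    exact hu0 (by rw [← h1, h2])


set_option maxHeartbeats 1000000 in
lemma compat_construction {σW σF : Matrix (Fin d) (Fin d) ℂ} (hW : σW.PosSemidef)
    (hF : σF.PosSemidef) (f : Fin d → ℂ) (γ : ℂ) (hγ : γ ≠ 0) (hTf : hF.sqrt *ᵥ f ≠ 0)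
    (hpar : hW.sqrt *ᵥ f = γ • (hF.sqrt *ᵥ f)) :
    ∃ (X : Type) (_ : Fintype X) (_ : Nonempty X) (E : X → Matrix (Fin d) (Fin d) ℂ) (x' : X),
      (∀ x, (E x).PosSemidef) ∧ (∑ x, E x = 1) ∧ (E x' * σW).trace ≠ 0 ∧
      (E x' * σF).trace ≠ 0 ∧
      ((E x' * σW).trace)⁻¹ • (hW.sqrt * E x' * hW.sqrt)
        = ((E x' * σF).trace)⁻¹ • (hF.sqrt * E x' * hF.sqrt) := by
  classical
  set S := hW.sqrt with hSdef
  set T := hF.sqrt with hTdef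
  have hSH : S.IsHermitian := hW.posSemidef_sqrt.1
  have hTH : T.IsHermitian := hF.posSemidef_sqrt.1
  have hσW : S * S = σW := hW.sqrt_mul_self
  have hσF : T * T = σF := hF.sqrt_mul_self
  have hf0 : f ≠ 0 := fun h => hTf (by rw [h, mulVec_zero])
  set c : ℂ := star f ⬝ᵥ f with hcdef
  have hc0 : c ≠ 0 := fun h => hf0 (dotProduct_star_self_eq_zero.mp h)
  have hcstar : star c = c := by
    rw [hcdef]
    simp only [dotProduct, star_sum, star_mul', star_star, Pi.star_apply]
    exact Finset.sum_congr rfl fun i _ => mul_comm _ _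
  set Pi : Matrix (Fin d) (Fin d) ℂ := c⁻¹ • vecMulVec f (star f) with hPidef
  have hvvH : (vecMulVec f (star f))ᴴ = vecMulVec f (star f) := vecMulVec_conjTranspose f
  have hPiH : Piᴴ = Pi := by
    rw [hPidef, conjTranspose_smul, hvvH, star_inv₀, hcstar]
  have hPi2 : Pi * Pi = Pi := by
    rw [hPidef, Matrix.smul_mul, Matrix.mul_smul, vecMulVec_mul_vecMulVec, ← hcdef,
      smul_smul, smul_smul]
    congr 1
    field_simp
  have hPipsd : Pi.PosSemidef := by
    have h := posSemidef_conjTranspose_mul_self Pi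
    rwa [hPiH, hPi2] at h
  have hCpsd : ((1 : Matrix (Fin d) (Fin d) ℂ) - Pi).PosSemidef := by
    have h1 : ((1 : Matrix (Fin d) (Fin d) ℂ) - Pi)ᴴ = 1 - Pi := by
      rw [conjTranspose_sub, conjTranspose_one, hPiH]
    have h2 : ((1 : Matrix (Fin d) (Fin d) ℂ) - Pi) * (1 - Pi) = 1 - Pi := by
      rw [Matrix.mul_sub, Matrix.mul_one, Matrix.sub_mul, Matrix.one_mul, hPi2]
      abel
    have h := posSemidef_conjTranspose_mul_self ((1 : Matrix (Fin d) (Fin d) ℂ) - Pi)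
    rwa [h1, h2] at h
  set u : Fin d → ℂ := T *ᵥ f with hudef
  have hSf : S *ᵥ f = γ • u := hpar
  set nW : ℂ := star (S *ᵥ f) ⬝ᵥ (S *ᵥ f) with hnWdef
  set nT : ℂ := star u ⬝ᵥ u with hnTdef
  have hSf0 : S *ᵥ f ≠ 0 := by rw [hSf]; exact smul_ne_zero hγ hTf
  have hnW0 : nW ≠ 0 := fun h => hSf0 (dotProduct_star_self_eq_zero.mp h)
  have hnT0 : nT ≠ 0 := fun h => hTf (dotProduct_star_self_eq_zero.mp h)
  -- traces
  have htrW : (Pi * σW).trace = c⁻¹ * nW := by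
    rw [hPidef, Matrix.smul_mul, trace_smul, smul_eq_mul, trace_vecMulVec_mul]
    congr 1
    rw [← hσW, ← mulVec_mulVec, dotProduct_mulVec, ← star_mulVec_of_hermitian hSH]
  have htrF : (Pi * σF).trace = c⁻¹ * nT := by
    rw [hPidef, Matrix.smul_mul, trace_smul, smul_eq_mul, trace_vecMulVec_mul]
    congr 1
    rw [← hσF, ← mulVec_mulVec, dotProduct_mulVec, ← star_mulVec_of_hermitian hTH]
  -- sandwiched matrices
  have hkeyW : S * Pi * S = c⁻¹ • vecMulVec (S *ᵥ f) (star (S *ᵥ f)) := by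
    rw [hPidef, Matrix.mul_smul, Matrix.smul_mul, mul_vecMulVec, vecMulVec_mul,
      ← star_mulVec_of_hermitian hSH]
  have hkeyF : T * Pi * T = c⁻¹ • vecMulVec u (star u) := by
    rw [hPidef, Matrix.mul_smul, Matrix.smul_mul, mul_vecMulVec, vecMulVec_mul,
      ← star_mulVec_of_hermitian hTH, hudef]
  have hVW : vecMulVec (S *ᵥ f) (star (S *ᵥ f)) = (γ * star γ) • vecMulVec u (star u) := by
    rw [hSf, star_smul, smul_vecMulVec, vecMulVec_smul', smul_smul]
  have hnWT : nW = (γ * star γ) * nT := by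
    rw [hnWdef, hSf, hnTdef, star_smul, smul_dotProduct, dotProduct_smul]
    simp only [smul_eq_mul]
    ring
  refine ⟨Fin 2, inferInstance, inferInstance, ![Pi, 1 - Pi], 0, ?_, ?_, ?_, ?_, ?_⟩
  · intro x
    fin_cases x
    · simpa using hPipsd
    · simpa using hCpsd
  · simp [Fin.sum_univ_two]
  · simp only [Matrix.cons_val_zero]
    rw [htrW]
    exact mul_ne_zero (inv_ne_zero hc0) hnW0
  · simp only [Matrix.cons_val_zero]
    rw [htrF]
    exact mul_ne_zero (inv_ne_zero hc0) hnT0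
  · simp only [Matrix.cons_val_zero]
    rw [htrW, htrF, hkeyW, hkeyF, hVW]
    rw [smul_smul, smul_smul, smul_smul]
    congr 1
    rw [hnWT]
    have hγs : star γ ≠ 0 := star_ne_zero.mpr hγ
    field_simp [hc0, hγ, hγs, hnT0]

end QSBC

open QSBC

/-- **Quantum subjective Bayesian compatibility**: two density matrices on `ℂ^d`
admit a POVM with an outcome whose quantum Bayesian updates
`σ ↦ (√σ E √σ)/Tr(Eσ)` coincide iff the intersection of their supports (ranges)
contains a nonzero vector. -/
theorem quantum_subjective_bayesian_compatibility
    (d : ℕ) (hd : 1 ≤ d)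
    (σW σF : Matrix (Fin d) (Fin d) ℂ)
    (hW : σW.PosSemidef) (hWtr : σW.trace = 1)
    (hF : σF.PosSemidef) (hFtr : σF.trace = 1) :
    (∃ (X : Type) (_ : Fintype X) (_ : Nonempty X)
       (E : X → Matrix (Fin d) (Fin d) ℂ) (x' : X),
        (∀ x, (E x).PosSemidef) ∧ (∑ x, E x = 1) ∧
        (E x' * σW).trace ≠ 0 ∧
        (E x' * σF).trace ≠ 0 ∧
        ((E x' * σW).trace)⁻¹ • (hW.sqrt * E x' * hW.sqrt)
          = ((E x' * σF).trace)⁻¹ • (hF.sqrt * E x' * hF.sqrt))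
    ↔ (∃ v : Fin d → ℂ, v ≠ 0 ∧
        v ∈ LinearMap.range σW.mulVecLin ∧ v ∈ LinearMap.range σF.mulVecLin) := by
  constructor
  · rintro ⟨X, _, _, E, x', hpsd, hsumE, htW, htF, heq⟩
    set S := hW.sqrt with hSdef
    set T := hF.sqrt with hTdef
    set c : ℂ := (E x' * σW).trace with hcdef
    set ρ : Matrix (Fin d) (Fin d) ℂ := c⁻¹ • (S * E x' * S) with hρdef
    have htrρ : ρ.trace = 1 := by
      have h1 : (S * E x' * S).trace = c := by
        rw [trace_mul_cycle, hSdef, hW.sqrt_mul_self, trace_mul_comm, hcdef]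
      rw [hρdef, trace_smul, smul_eq_mul, h1, inv_mul_cancel₀ htW]
    have hρ0 : ρ ≠ 0 := by
      intro h
      rw [h, trace_zero] at htrρ
      exact zero_ne_one htrρ
    have hex : ∃ wv, ρ *ᵥ wv ≠ 0 := by
      by_contra h
      push_neg at h
      exact hρ0 (eq_zero_of_forall_mulVec h)
    obtain ⟨wv, hwv⟩ := hex
    have hmemS : ρ *ᵥ wv ∈ LinearMap.range S.mulVecLin := by
      refine ⟨c⁻¹ • ((E x' * S) *ᵥ wv), ?_⟩
      rw [mulVecLin_apply, mulVec_smul, mulVec_mulVec, ← Matrix.mul_assoc, hρdef,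
        smul_mulVec]
    have hmemT : ρ *ᵥ wv ∈ LinearMap.range T.mulVecLin := by
      refine ⟨((E x' * σF).trace)⁻¹ • ((E x' * T) *ᵥ wv), ?_⟩
      rw [mulVecLin_apply, mulVec_smul, mulVec_mulVec, ← Matrix.mul_assoc, heq,
        smul_mulVec]
    refine ⟨ρ *ᵥ wv, hwv, ?_, ?_⟩
    · rw [range_sqrt hW]
      exact hmemS
    · rw [range_sqrt hF]
      exact hmemT
  · rintro ⟨v, hv, hvW, hvF⟩
    rw [range_sqrt hW] at hvW
    rw [range_sqrt hF] at hvF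
    obtain ⟨a, ha⟩ := hvW
    obtain ⟨b, hb⟩ := hvF
    obtain ⟨f, γ, hγ, hTf, hpar⟩ := exists_parallel hW.posSemidef_sqrt hF.posSemidef_sqrt hv
      ⟨a, by simpa [mulVecLin_apply] using ha⟩ ⟨b, by simpa [mulVecLin_apply] using hb⟩
    exact compat_construction hW hF f γ hγ hTf hpar
end

section
/- Let σ_W and σ_F be density matrices on ℂ^d (d ≥ 1). Then the following are equivalent: (i) there exist finite nonempty types X₁ and X₂ and a family of positive semidefinite d×d complex matrices M(x₁, x₂) indexed by X₁ × X₂ with ∑_{x₁,x₂} Tr(M(x₁,x₂)) = 1, together with outcomes x₁ ∈ X₁ and x₂ ∈ X₂ such that (a) Tr(M(x₁, x₂)) ≠ 0, (b) the normalization t₁ := ∑_{x₂'} Tr(M(x₁, x₂')) is nonzero and σ_W = (∑_{x₂'} M(x₁, x₂'))/t₁, and (c) the normalization t₂ := ∑_{x₁'} Tr(M(x₁', x₂)) is nonzero and σ_F = (∑_{x₁'} M(x₁', x₂))/t₂; (ii) the intersection of the ranges of σ_W and σ_F contains a nonzero vector. -/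
open Matrix
open scoped ComplexOrder

section Helpers

theorem vecMulVec_star_mulVec {d : ℕ} (v x : Fin d → ℂ) :
    vecMulVec v (star v) *ᵥ x = (star v ⬝ᵥ x) • v := by
  ext i
  simp [vecMulVec_apply, mulVec, dotProduct, Finset.mul_sum, mul_comm, mul_left_comm]

theorem isHermitian_vecMulVec_star {d : ℕ} (v : Fin d → ℂ) :
    (vecMulVec v (star v)).IsHermitian := by
  ext i j
  simp [conjTranspose_apply, vecMulVec_apply, mul_comm]

theorem dotProduct_vecMulVec_star {d : ℕ} (v x : Fin d → ℂ) :
    star x ⬝ᵥ vecMulVec v (star v) *ᵥ x = (star v ⬝ᵥ x) * (star x ⬝ᵥ v) := by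
  rw [vecMulVec_star_mulVec, dotProduct_smul, smul_eq_mul, mul_comm]

theorem posSemidef_vecMulVec_star {d : ℕ} (v : Fin d → ℂ) :
    (vecMulVec v (star v)).PosSemidef := by
  refine .of_dotProduct_mulVec_nonneg (isHermitian_vecMulVec_star v) fun x => ?_
  rw [dotProduct_vecMulVec_star]
  have : star v ⬝ᵥ x = star (star x ⬝ᵥ v) := by
    simp [dotProduct, star_sum, mul_comm]
  rw [this]
  exact star_mul_self_nonneg _

theorem psd_smul_real {d : ℕ} {P : Matrix (Fin d) (Fin d) ℂ} (hP : P.PosSemidef)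
    {c : ℝ} (hc : 0 ≤ c) : ((c : ℂ) • P).PosSemidef := by
  refine .of_dotProduct_mulVec_nonneg ?_ ?_
  · unfold Matrix.IsHermitian
    rw [conjTranspose_smul, hP.1]
    simp [Complex.star_def, Complex.conj_ofReal]
  · intro x
    rw [smul_mulVec, dotProduct_smul, smul_eq_mul]
    exact mul_nonneg (by exact_mod_cast hc) (hP.dotProduct_mulVec_nonneg x)

theorem symm_range_eq_orth_ker {d : ℕ}
    (T : EuclideanSpace ℂ (Fin d) →ₗ[ℂ] EuclideanSpace ℂ (Fin d))
    (hT : T.IsSymmetric) :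
    LinearMap.range T = (LinearMap.ker T)ᗮ := by
  have h1 : (LinearMap.range T)ᗮ = LinearMap.ker T := by
    ext x
    simp only [Submodule.mem_orthogonal, LinearMap.mem_ker]
    constructor
    · intro h
      have := h (T (T x)) ⟨T x, rfl⟩
      rw [hT] at this
      exact inner_self_eq_zero.mp this
    · intro h u hu
      obtain ⟨y, rfl⟩ := hu
      rw [hT, h, inner_zero_right]
  rw [← h1, Submodule.orthogonal_orthogonal]

theorem toEuclideanLin_eq_zero_iff {d : ℕ} (A : Matrix (Fin d) (Fin d) ℂ)
    (x : EuclideanSpace ℂ (Fin d)) :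
    Matrix.toEuclideanLin A x = 0 ↔ A *ᵥ (WithLp.equiv 2 (Fin d → ℂ) x) = 0 := by
  rw [Matrix.toEuclideanLin_apply]
  exact ⟨fun h => by simpa using congrArg (WithLp.equiv 2 (Fin d → ℂ)) h, fun h => by simpa using h⟩

theorem psd_range_le {d : ℕ} {M R : Matrix (Fin d) (Fin d) ℂ}
    (hM : M.PosSemidef) (hR : R.PosSemidef) :
    LinearMap.range M.mulVecLin ≤ LinearMap.range (M + R).mulVecLin := by
  have hker : LinearMap.ker (Matrix.toEuclideanLin (M + R)) ≤
      LinearMap.ker (Matrix.toEuclideanLin M) := by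
    intro x hx
    rw [LinearMap.mem_ker, toEuclideanLin_eq_zero_iff] at hx ⊢
    set y := WithLp.equiv 2 (Fin d → ℂ) x
    have h0 : star y ⬝ᵥ (M + R) *ᵥ y = 0 := by rw [hx, dotProduct_zero]
    rw [add_mulVec, dotProduct_add] at h0
    have hMy : star y ⬝ᵥ M *ᵥ y = 0 :=
      ((add_eq_zero_iff_of_nonneg (hM.dotProduct_mulVec_nonneg y) (hR.dotProduct_mulVec_nonneg y)).mp h0).1
    exact (hM.dotProduct_mulVec_zero_iff y).mp hMy
  have hrange : LinearMap.range (Matrix.toEuclideanLin M) ≤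
      LinearMap.range (Matrix.toEuclideanLin (M + R)) := by
    rw [symm_range_eq_orth_ker _ (Matrix.isHermitian_iff_isSymmetric.mp hM.1),
      symm_range_eq_orth_ker _ (Matrix.isHermitian_iff_isSymmetric.mp (hM.add hR).1)]
    exact Submodule.orthogonal_le hker
  rintro v ⟨w, rfl⟩
  have : Matrix.toEuclideanLin M ((WithLp.equiv 2 (Fin d → ℂ)).symm w) ∈
      LinearMap.range (Matrix.toEuclideanLin (M + R)) :=
    hrange ⟨_, rfl⟩
  obtain ⟨u, hu⟩ := this
  refine ⟨WithLp.equiv 2 (Fin d → ℂ) u, ?_⟩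
  have := congrArg (WithLp.equiv 2 (Fin d → ℂ)) hu
  simpa [Matrix.toEuclideanLin_apply, Matrix.mulVecLin_apply] using this

theorem psd_sub_exists {d : ℕ} {A : Matrix (Fin d) (Fin d) ℂ} (hA : A.PosSemidef)
    {v : Fin d → ℂ} (hv : v ≠ 0) (hmem : v ∈ LinearMap.range A.mulVecLin) :
    ∃ c : ℝ, 0 < c ∧ (A - (c : ℂ) • vecMulVec v (star v)).PosSemidef := by
  obtain ⟨w, hw⟩ := hmem
  rw [mulVecLin_apply] at hw
  obtain ⟨B, hB⟩ : ∃ B : Matrix (Fin d) (Fin d) ℂ, A = Bᴴ * B := by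
    open scoped MatrixOrder Matrix.Norms.L2Operator in
    obtain ⟨B, hB⟩ := CStarAlgebra.nonneg_iff_eq_star_mul_self.mp hA.nonneg
    exact ⟨B, hB⟩
  set e := (WithLp.equiv 2 (Fin d → ℂ)).symm with he
  have hform : ∀ x y : Fin d → ℂ, star x ⬝ᵥ A *ᵥ y = (inner ℂ (e (B *ᵥ x)) (e (B *ᵥ y)) : ℂ) := by
    intro x y
    rw [he, WithLp.equiv_symm_apply, EuclideanSpace.inner_toLp_toLp, hB, ← mulVec_mulVec, dotProduct_mulVec,
      ← star_mulVec, dotProduct_comm]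
  set b := e (B *ᵥ w) with hb
  have hbne : b ≠ 0 := by
    intro h
    apply hv
    rw [← hw, hB, ← mulVec_mulVec]
    have : B *ᵥ w = 0 := by
      simpa [hb, he] using congrArg (WithLp.equiv 2 (Fin d → ℂ)) h
    rw [this, mulVec_zero]
  have hnb : (0:ℝ) < ‖b‖ ^ 2 := pow_pos (norm_pos_iff.mpr hbne) 2
  refine ⟨(‖b‖ ^ 2)⁻¹, by positivity, ?_⟩
  refine .of_dotProduct_mulVec_nonneg ?_ ?_
  · refine (hA.1.sub ?_)
    unfold Matrix.IsHermitian
    rw [conjTranspose_smul, (isHermitian_vecMulVec_star v)]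
    simp [Complex.star_def, Complex.conj_ofReal]
  · intro x
    rw [sub_mulVec, dotProduct_sub, smul_mulVec, dotProduct_smul,
      dotProduct_vecMulVec_star]
    set a := e (B *ᵥ x) with ha
    have h1 : star x ⬝ᵥ A *ᵥ x = ((‖a‖ ^ 2 : ℝ) : ℂ) := by
      rw [hform x x, inner_self_eq_norm_sq_to_K, ← ha]
      norm_cast
    have h2 : star x ⬝ᵥ v = (inner ℂ a b : ℂ) := by rw [← hw, hform]
    have h3 : star v ⬝ᵥ x = starRingEnd ℂ (inner ℂ a b : ℂ) := by
      have : star v ⬝ᵥ x = starRingEnd ℂ (star x ⬝ᵥ v) := by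
        simp [dotProduct, map_sum, mul_comm]
      rw [this, h2]
    rw [h2, h3, smul_eq_mul]
    have h4 : (starRingEnd ℂ) (inner ℂ a b : ℂ) * (inner ℂ a b : ℂ)
        = ((‖(inner ℂ a b : ℂ)‖ ^ 2 : ℝ) : ℂ) := by
      rw [Complex.conj_mul']
      push_cast; ring
    rw [h4, ← Complex.ofReal_mul, h1, ← Complex.ofReal_sub, Complex.zero_le_real]
    have h5 : ‖(inner ℂ a b : ℂ)‖ ^ 2 ≤ ‖a‖ ^ 2 * ‖b‖ ^ 2 := by
      have := norm_inner_le_norm (𝕜 := ℂ) a b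
      calc ‖(inner ℂ a b : ℂ)‖ ^ 2 ≤ (‖a‖ * ‖b‖) ^ 2 := by
            apply pow_le_pow_left₀ (norm_nonneg _) this
        _ = ‖a‖ ^ 2 * ‖b‖ ^ 2 := by ring
    have : (‖b‖ ^ 2)⁻¹ * ‖(inner ℂ a b : ℂ)‖ ^ 2 ≤ ‖a‖ ^ 2 := by
      rw [inv_mul_le_iff₀ hnb]
      linarith [h5]
    linarith

theorem trace_vecMulVec_star {d : ℕ} (v : Fin d → ℂ) :
    (vecMulVec v (star v)).trace = ((∑ i, Complex.normSq (v i) : ℝ) : ℂ) := by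
  rw [Matrix.trace]
  push_cast
  refine Finset.sum_congr rfl fun i _ => ?_
  rw [Matrix.diag_apply, vecMulVec_apply, Pi.star_apply, Complex.normSq_eq_conj_mul_self,
    Complex.star_def]
  ring

end Helpers

/-- **Quantum objective Bayesian compatibility**: two density matrices on `ℂ^d`
arise by Bayesian conditioning from a common hybrid classical–quantum state
(a family of PSD matrices with total trace 1) iff the intersection of their
supports (ranges) contains a nonzero vector. -/
theorem quantum_objective_bayesian_compatibility
    (d : ℕ) (hd : 1 ≤ d)
    (σW σF : Matrix (Fin d) (Fin d) ℂ)
    (hW : σW.PosSemidef) (hWtr : σW.trace = 1)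
    (hF : σF.PosSemidef) (hFtr : σF.trace = 1) :
    (∃ (X₁ : Type) (_ : Fintype X₁) (_ : Nonempty X₁)
       (X₂ : Type) (_ : Fintype X₂) (_ : Nonempty X₂)
       (M : X₁ → X₂ → Matrix (Fin d) (Fin d) ℂ) (x₁ : X₁) (x₂ : X₂),
        (∀ y₁ y₂, (M y₁ y₂).PosSemidef) ∧
        (∑ y₁, ∑ y₂, (M y₁ y₂).trace = 1) ∧
        -- (a)
        (M x₁ x₂).trace ≠ 0 ∧
        -- (b)
        (∑ x₂', (M x₁ x₂').trace) ≠ 0 ∧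
        σW = (∑ x₂', (M x₁ x₂').trace)⁻¹ • (∑ x₂', M x₁ x₂') ∧
        -- (c)
        (∑ x₁', (M x₁' x₂).trace) ≠ 0 ∧
        σF = (∑ x₁', (M x₁' x₂).trace)⁻¹ • (∑ x₁', M x₁' x₂))
    ↔ (∃ v : Fin d → ℂ, v ≠ 0 ∧
        v ∈ LinearMap.range σW.mulVecLin ∧ v ∈ LinearMap.range σF.mulVecLin) := by
  constructor
  · -- forward: compatibility → common support vector
    rintro ⟨X₁, i1, n1, X₂, i2, n2, M, x₁, x₂, hPSD, htot, ha, ht1, hσW, ht2, hσF⟩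
    -- find a nonzero diagonal entry of M x₁ x₂
    rw [Matrix.trace] at ha
    obtain ⟨i, -, hi⟩ := Finset.exists_ne_zero_of_sum_ne_zero ha
    rw [Matrix.diag_apply] at hi
    set v : Fin d → ℂ := M x₁ x₂ *ᵥ Pi.single i 1 with hv
    have hvi : v i = M x₁ x₂ i i := by simp [hv]
    have hvne : v ≠ 0 := fun h => hi (by rw [← hvi, h, Pi.zero_apply])
    have hvmem : v ∈ LinearMap.range (M x₁ x₂).mulVecLin :=
      ⟨Pi.single i 1, by rw [mulVecLin_apply]⟩
    have key : ∀ (Y : Type) (_ : Fintype Y) (g : Y → Matrix (Fin d) (Fin d) ℂ)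
        (y₀ : Y) (σ : Matrix (Fin d) (Fin d) ℂ),
        (∀ y, (g y).PosSemidef) → g y₀ = M x₁ x₂ →
        (∑ y, (g y).trace) ≠ 0 → σ = (∑ y, (g y).trace)⁻¹ • (∑ y, g y) →
        v ∈ LinearMap.range σ.mulVecLin := by
      intro Y iY g y₀ σ hg hgy₀ htne hσ
      haveI := Classical.decEq Y
      set S := ∑ y, g y with hS
      have hsplit : S = M x₁ x₂ + ∑ y ∈ Finset.univ.erase y₀, g y := by
        rw [hS, ← hgy₀, ← Finset.add_sum_erase _ g (Finset.mem_univ y₀)]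
      have hRpsd : (∑ y ∈ Finset.univ.erase y₀, g y).PosSemidef :=
        Finset.sum_induction _ _ (fun a b hab => hab.add) Matrix.PosSemidef.zero
          (fun y _ => hg y)
      have hvS : v ∈ LinearMap.range S.mulVecLin := by
        rw [hsplit]
        exact psd_range_le (hPSD x₁ x₂) hRpsd hvmem
      obtain ⟨u, hu⟩ := hvS
      rw [mulVecLin_apply] at hu
      refine ⟨(∑ y, (g y).trace) • u, ?_⟩
      rw [mulVecLin_apply, hσ, smul_mulVec, mulVec_smul, hu, smul_smul,
        inv_mul_cancel₀ htne, one_smul]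
    refine ⟨v, hvne, ?_, ?_⟩
    · exact key X₂ i2 (fun y => M x₁ y) x₂ σW (fun y => hPSD x₁ y) rfl ht1 hσW
    · exact key X₁ i1 (fun y => M y x₂) x₁ σF (fun y => hPSD y x₂) rfl ht2 hσF
  · -- backward: common support vector → compatibility
    rintro ⟨v, hv, hvW, hvF⟩
    obtain ⟨cW, hcW, hWP⟩ := psd_sub_exists hW hv hvW
    obtain ⟨cF, hcF, hFP⟩ := psd_sub_exists hF hv hvF
    set p : ℝ := ∑ i, Complex.normSq (v i) with hp
    have hppos : 0 < p := by
      rcases Function.ne_iff.mp hv with ⟨j, hj⟩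
      refine Finset.sum_pos' (fun i _ => Complex.normSq_nonneg _) ⟨j, Finset.mem_univ j, ?_⟩
      exact Complex.normSq_pos.mpr hj
    set c : ℝ := min (min cW cF) p⁻¹ with hc
    have hcpos : 0 < c := lt_min (lt_min hcW hcF) (by positivity)
    have hccW : c ≤ cW := le_trans (min_le_left _ _) (min_le_left _ _)
    have hccF : c ≤ cF := le_trans (min_le_left _ _) (min_le_right _ _)
    have hτle : c * p ≤ 1 := by
      have : c ≤ p⁻¹ := min_le_right _ _
      calc c * p ≤ p⁻¹ * p := by nlinarith
        _ = 1 := inv_mul_cancel₀ hppos.ne'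
    set τ : ℝ := c * p with hτ
    have hτpos : 0 < τ := mul_pos hcpos hppos
    set t : ℝ := (2 - τ)⁻¹ with ht
    have h2τ : 0 < 2 - τ := by linarith
    have htpos : 0 < t := by positivity
    set V := vecMulVec v (star v) with hV
    have hVpsd : V.PosSemidef := posSemidef_vecMulVec_star v
    set P := (c : ℂ) • V with hP
    have hPpsd : P.PosSemidef := psd_smul_real hVpsd hcpos.le
    have hsub : ∀ (σ : Matrix (Fin d) (Fin d) ℂ) (c₀ : ℝ), c ≤ c₀ →
        (σ - (c₀ : ℂ) • V).PosSemidef → (σ - P).PosSemidef := by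
      intro σ c₀ hcc₀ hσ₀
      have hrw : σ - P = (σ - (c₀ : ℂ) • V) + ((c₀ - c : ℝ) : ℂ) • V := by
        rw [hP]
        push_cast
        rw [sub_smul]
        abel
      rw [hrw]
      exact hσ₀.add (psd_smul_real hVpsd (by linarith))
    have hWsub : (σW - P).PosSemidef := hsub σW cW hccW hWP
    have hFsub : (σF - P).PosSemidef := hsub σF cF hccF hFP
    have htrV : V.trace = ((p : ℝ) : ℂ) := trace_vecMulVec_star v
    have htrP : P.trace = ((τ : ℝ) : ℂ) := by
      rw [hP, trace_smul, htrV, smul_eq_mul, hτ]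
      push_cast; ring
    have htrWP : (σW - P).trace = 1 - ((τ : ℝ) : ℂ) := by
      rw [trace_sub, hWtr, htrP]
    have htrFP : (σF - P).trace = 1 - ((τ : ℝ) : ℂ) := by
      rw [trace_sub, hFtr, htrP]
    set MM : Fin 2 → Fin 2 → Matrix (Fin d) (Fin d) ℂ :=
      ![![(t : ℂ) • P, (t : ℂ) • (σW - P)], ![(t : ℂ) • (σF - P), 0]] with hMM
    have htne : ((t : ℝ) : ℂ) ≠ 0 := by exact_mod_cast htpos.ne'
    have hτne : ((τ : ℝ) : ℂ) ≠ 0 := by exact_mod_cast hτpos.ne'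
    refine ⟨Fin 2, inferInstance, inferInstance, Fin 2, inferInstance, inferInstance,
      MM, 0, 0, ?_, ?_, ?_, ?_, ?_, ?_, ?_⟩
    · intro y₁ y₂
      fin_cases y₁ <;> fin_cases y₂
      · exact psd_smul_real hPpsd htpos.le
      · exact psd_smul_real hWsub htpos.le
      · exact psd_smul_real hFsub htpos.le
      · exact Matrix.PosSemidef.zero
    · simp only [hMM, Fin.sum_univ_two, Matrix.cons_val_zero, Matrix.cons_val_one,
        Matrix.head_cons, trace_smul, htrP, htrWP, htrFP, trace_zero, smul_eq_mul, mul_zero]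
      have hkey : ((t : ℝ) : ℂ) * (2 - ((τ : ℝ) : ℂ)) = 1 := by
        have h' : t * (2 - τ) = 1 := by
          rw [ht]; exact inv_mul_cancel₀ h2τ.ne'
        exact_mod_cast h'
      linear_combination hkey
    · simp only [hMM, Matrix.cons_val_zero, trace_smul, htrP, smul_eq_mul]
      exact mul_ne_zero htne hτne
    · simp only [hMM, Fin.sum_univ_two, Matrix.cons_val_zero, Matrix.cons_val_one,
        Matrix.head_cons, trace_smul, htrP, htrWP, smul_eq_mul]
      have hone : ((τ : ℝ) : ℂ) + (1 - ((τ : ℝ) : ℂ)) = 1 := by ring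
      rw [← mul_add, hone, mul_one]
      exact htne
    · have hsum : (∑ x₂', MM 0 x₂') = (t : ℂ) • σW := by
        simp only [hMM, Fin.sum_univ_two, Matrix.cons_val_zero, Matrix.cons_val_one,
          Matrix.head_cons]
        rw [← smul_add, add_sub_cancel]
      have hsumtr : (∑ x₂', (MM 0 x₂').trace) = (t : ℂ) := by
        simp only [hMM, Fin.sum_univ_two, Matrix.cons_val_zero, Matrix.cons_val_one,
          Matrix.head_cons, trace_smul, htrP, htrWP, smul_eq_mul]
        have hone : ((τ : ℝ) : ℂ) + (1 - ((τ : ℝ) : ℂ)) = 1 := by ring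
        rw [← mul_add, hone, mul_one]
      rw [hsum, hsumtr, smul_smul, inv_mul_cancel₀ htne, one_smul]
    · simp only [hMM, Fin.sum_univ_two, Matrix.cons_val_zero, Matrix.cons_val_one,
        Matrix.head_cons, trace_smul, htrP, htrFP, smul_eq_mul]
      have hone : ((τ : ℝ) : ℂ) + (1 - ((τ : ℝ) : ℂ)) = 1 := by ring
      rw [← mul_add, hone, mul_one]
      exact htne
    · have hsum : (∑ x₁', MM x₁' 0) = (t : ℂ) • σF := by
        simp only [hMM, Fin.sum_univ_two, Matrix.cons_val_zero, Matrix.cons_val_one,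
          Matrix.head_cons]
        rw [← smul_add, add_sub_cancel]
      have hsumtr : (∑ x₁', (MM x₁' 0).trace) = (t : ℂ) := by
        simp only [hMM, Fin.sum_univ_two, Matrix.cons_val_zero, Matrix.cons_val_one,
          Matrix.head_cons, trace_smul, htrP, htrFP, smul_eq_mul]
        have hone : ((τ : ℝ) : ℂ) + (1 - ((τ : ℝ) : ℂ)) = 1 := by ring
        rw [← mul_add, hone, mul_one]
      rw [hsum, hsumtr, smul_smul, inv_mul_cancel₀ htne, one_smul]
end

section
/- Let Y = {φ⁺, φ⁻, ψ⁺, ψ⁻} and let P : Y × Fin 2 × Fin 2 → ℝ be the joint distribution defined by P(φ⁺, 0, 0) = 1/2, P(φ⁻, 0, 1) = 1/2, and P(y, f, w) = 0 otherwise. Then P is a probability distribution (nonnegative, summing to 1), the marginal P(F = 0) = ∑_{y,w} P(y, 0, w) equals 1 and the conditional y ↦ (∑_w P(y, 0, w))/P(F = 0) equals the Friend's distribution (1/2, 1/2, 0, 0), while the marginal P(W = 0) = ∑_{y,f} P(y, f, 0) equals 1/2 and the conditional y ↦ (∑_f P(y, f, 0))/P(W = 0) equals Wigner's distribution (1, 0,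 0, 0). Hence P is a common ('virtual past') prior from which both agents' assignments arise by Bayesian conditioning, witnessing their objective Bayesian compatibility. -/
noncomputable section

/-- The joint 'virtual past' distribution over `Y × F × W`, where
`Y = Fin 4` indexes the Bell outcomes (φ⁺, φ⁻, ψ⁺, ψ⁻) and `F, W : Fin 2` are
the Friend's and Wigner's classical data:
`P(φ⁺,0,0) = 1/2`, `P(φ⁻,0,1) = 1/2`, and `P = 0` otherwise. -/
def Pjoint : Fin 4 × Fin 2 × Fin 2 → ℝ := fun z =>
  if z = (0, 0, 0) then 1 / 2 else if z = (1, 0, 1) then 1 / 2 else 0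

/-- `Pjoint` is a probability distribution; conditioning on `F = 0` recovers
the Friend's distribution `(1/2, 1/2, 0, 0)` and conditioning on `W = 0`
recovers Wigner's distribution `(1, 0, 0, 0)`: a common prior witnessing
objective Bayesian compatibility. -/
theorem virtual_past_common_prior :
    (∀ z, 0 ≤ Pjoint z) ∧
    (∑ z, Pjoint z = 1) ∧
    (∑ y, ∑ w, Pjoint (y, 0, w)) = 1 ∧
    (∀ y : Fin 4,
      (∑ w, Pjoint (y, 0, w)) / (∑ y', ∑ w, Pjoint (y', 0, w))
        = (![1 / 2, 1 / 2, 0, 0] : Fin 4 → ℝ) y) ∧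
    (∑ y, ∑ f, Pjoint (y, f, 0)) = 1 / 2 ∧
    (∀ y : Fin 4,
      (∑ f, Pjoint (y, f, 0)) / (∑ y', ∑ f, Pjoint (y', f, 0))
        = (![1, 0, 0, 0] : Fin 4 → ℝ) y) := by
  refine ⟨fun z => ?_, ?_, ?_, ?_, ?_, ?_⟩
  · simp only [Pjoint]; split_ifs <;> norm_num
  · simp [Pjoint, Fintype.sum_prod_type, Fin.sum_univ_four, Fin.sum_univ_two, Prod.ext_iff]; norm_num
  · simp [Pjoint, Fin.sum_univ_four, Fin.sum_univ_two, Prod.ext_iff]; norm_num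
  · intro y
    fin_cases y <;> simp [Pjoint, Fin.sum_univ_four, Fin.sum_univ_two, Prod.ext_iff] <;> norm_num
  · simp [Pjoint, Fin.sum_univ_four, Fin.sum_univ_two, Prod.ext_iff]
  · intro y
    fin_cases y <;> simp [Pjoint, Fin.sum_univ_four, Fin.sum_univ_two, Prod.ext_iff] <;> norm_num
end
end
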